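/- Let D ≥ 1 and consider a complete binary tree of depth D with real split values s_t ≠ 0 at every internal node, and rewards q_t (with q_1 = 1). Then the vector z* ∈ ℝ^{2^{D+1}−1} defined by z*_t = 1 if t lies on the traversal path and z*_t = 0 otherwise is the unique maximizer of Σ_t z_t q_t over all vectors z with z_1 = 1 and z_t ∈ [0,1] for every t. In particular, the relaxed linear program has a unique, integral solution describing the tree traversal. (Lemma 1.) -/

import Mathlib

/-- The traversal path of a binary tree with split values `s`. -/
noncomputable def path (s : ℕ → ℝ) : ℕ → ℕ
  | 0 => 1
  | d + 1 => if s (path s d) < 0 then 2 * path s d else 2 * path s d + 1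

/-- The reward `q_t` (see Lemma 1). -/
noncomputable def reward (s : ℕ → ℝ) : ℕ → ℝ
  | 0 => 0
  | 1 => 1
  | 2 => - s 1
  | 3 => s 1
  | (t + 4) =>
      min (if (t + 4) % 2 = 1 then s ((t + 4) / 2) else - s ((t + 4) / 2))
        (reward s ((t + 4) / 2))
decreasing_by omega

/-!
`reward s t` is the minimum of the edge values `±s_{t'}` along the root path of `t`. When no split
value vanishes, this minimum is nonzero, and (by induction on the depth of `t`) it is positive
exactly when every edge on the way to `t` is the one the traversal takes, i.e. when `t` lies on
the traversal path. Hence `z*` is the indicator of `{t | 0 < q_t}`, and a linear form with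
nonvanishing coefficients has that indicator as its unique maximizer on the box `[0,1]^n`:
coordinatewise `z_t q_t ≤ z*_t q_t`, with equality only at `z_t = z*_t`.
-/

/-- The term `±s_{t/2}` that the edge into `t` contributes to the minimum defining `reward s t`
(odd nodes are right children). -/
def branchValue (s : ℕ → ℝ) (t : ℕ) : ℝ :=
  if t % 2 = 1 then s (t / 2) else -s (t / 2)

section Tree

variable {s : ℕ → ℝ}

lemma reward_one : reward s 1 = 1 := by
  rw [reward]

lemma reward_of_four_le {t : ℕ} (ht : 4 ≤ t) :
    reward s t = min (branchValue s t) (reward s (t / 2)) := by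
  obtain ⟨k, rfl⟩ : ∃ k, t = k + 4 := ⟨t - 4, by omega⟩
  rw [reward, branchValue]

lemma reward_eq_branchValue_or_eq_reward_div_two {t : ℕ} (ht : 2 ≤ t) :
    reward s t = branchValue s t ∨ reward s t = reward s (t / 2) := by
  obtain rfl | rfl | ht4 : t = 2 ∨ t = 3 ∨ 4 ≤ t := by omega
  · left; simp [reward, branchValue]
  · left; simp [reward, branchValue]
  · rw [reward_of_four_le ht4]
    exact min_choice _ _

lemma reward_pos_iff {t : ℕ} (ht : 2 ≤ t) :
    0 < reward s t ↔ 0 < branchValue s t ∧ 0 < reward s (t / 2) := by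
  obtain rfl | rfl | ht4 : t = 2 ∨ t = 3 ∨ 4 ≤ t := by omega
  · simp [reward, branchValue]
  · simp [reward, branchValue]
  · rw [reward_of_four_le ht4, lt_min_iff]

lemma branchValue_ne_zero {t : ℕ} (h : s (t / 2) ≠ 0) : branchValue s t ≠ 0 := by
  unfold branchValue
  split_ifs <;> simpa

lemma reward_ne_zero {d t : ℕ} (hs : ∀ u, 0 < u → u < 2 ^ d → s u ≠ 0) (ht₀ : 0 < t)
    (ht : t < 2 ^ (d + 1)) : reward s t ≠ 0 := by
  induction t using Nat.strong_induction_on with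
  | _ t ih =>
    obtain rfl | ht₂ : t = 1 ∨ 2 ≤ t := by omega
    · simp [reward_one]
    have hpow : 2 ^ (d + 1) = 2 * 2 ^ d := pow_succ' 2 d
    rcases reward_eq_branchValue_or_eq_reward_div_two (s := s) ht₂ with h | h <;> rw [h]
    · exact branchValue_ne_zero (hs _ (by omega) (by omega))
    · exact ih _ (by omega) (by omega) (by omega)

lemma path_succ_div_two (d : ℕ) : path s (d + 1) / 2 = path s d := by
  simp only [path]
  split <;> omega

lemma path_mem_Ico (d : ℕ) : path s d ∈ Set.Ico (2 ^ d) (2 ^ (d + 1)) := by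
  induction d with
  | zero => simp [path]
  | succ d ih =>
    simp only [Set.mem_Ico, pow_succ] at ih ⊢
    simp only [path]
    split <;> omega

lemma log_path (d : ℕ) : Nat.log 2 (path s d) = d :=
  Nat.log_eq_of_pow_le_of_lt_pow (path_mem_Ico d).1 (path_mem_Ico d).2

lemma exists_path_eq_iff {D t : ℕ} :
    (∃ d ≤ D, path s d = t) ↔ Nat.log 2 t ≤ D ∧ path s (Nat.log 2 t) = t := by
  constructor
  · rintro ⟨d, hd, rfl⟩
    rw [log_path]
    exact ⟨hd, rfl⟩
  · rintro ⟨hd, hpath⟩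
    exact ⟨_, hd, hpath⟩

lemma branchValue_pos_iff {d t : ℕ} (hs : s (path s d) ≠ 0) (ht : t / 2 = path s d) :
    0 < branchValue s t ↔ path s (d + 1) = t := by
  simp only [branchValue, path, ← ht]
  rcases hs.lt_or_gt with hsign | hsign <;> rw [← ht] at hsign <;>
    split_ifs <;> constructor <;> intro h <;> first | omega | linarith

lemma reward_pos_iff_path_eq {d t : ℕ} (hs : ∀ u, 0 < u → u < 2 ^ d → s u ≠ 0)
    (ht : t ∈ Set.Ico (2 ^ d) (2 ^ (d + 1))) : 0 < reward s t ↔ path s d = t := by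
  induction d generalizing t with
  | zero =>
    obtain rfl : t = 1 := by simp only [Set.mem_Ico, pow_zero, zero_add, pow_one] at ht; omega
    simp [reward_one, path]
  | succ d ih =>
    have hpow : 2 ^ (d + 1) = 2 * 2 ^ d := pow_succ' 2 d
    have hpow' : 2 ^ (d + 1 + 1) = 2 * 2 ^ (d + 1) := pow_succ' 2 (d + 1)
    simp only [Set.mem_Ico] at ht
    rw [reward_pos_iff (by omega),
      ih (fun u hu hu' => hs u hu (by omega)) (by simp only [Set.mem_Ico]; omega)]
    by_cases hp : path s d = t / 2
    · have hs' := hs (path s d) (by omega) (by omega)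
      rw [branchValue_pos_iff hs' hp.symm, and_iff_left hp]
    · simp only [hp, and_false, false_iff]
      rintro rfl
      exact hp (path_succ_div_two d).symm

end Tree

lemma mul_le_ite_pos_mul {z q : ℝ} (hz : z ∈ Set.Icc 0 1) :
    z * q ≤ (if 0 < q then 1 else 0) * q := by
  obtain ⟨hz₀, hz₁⟩ := hz
  split_ifs <;> nlinarith

lemma mul_lt_ite_pos_mul {z q : ℝ} (hq : q ≠ 0) (hz : z ∈ Set.Icc 0 1)
    (hne : z ≠ if 0 < q then 1 else 0) : z * q < (if 0 < q then 1 else 0) * q := by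
  obtain ⟨hz₀, hz₁⟩ := hz
  split_ifs at hne ⊢ with hpos
  · nlinarith [lt_of_le_of_ne hz₁ hne]
  · nlinarith [lt_of_le_of_ne hz₀ (Ne.symm hne), lt_of_le_of_ne (not_lt.1 hpos) hq]

lemma sum_mul_lt_of_ne_indicator_pos {ι : Type*} {S : Finset ι} {q z w : ι → ℝ}
    (hq : ∀ t ∈ S, q t ≠ 0) (hw : ∀ t ∈ S, w t = if 0 < q t then 1 else 0)
    (hz : ∀ t ∈ S, z t ∈ Set.Icc 0 1) (hne : ∃ t ∈ S, z t ≠ w t) :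
    ∑ t ∈ S, z t * q t < ∑ t ∈ S, w t * q t := by
  obtain ⟨t₀, ht₀, hne₀⟩ := hne
  refine Finset.sum_lt_sum (fun t ht => ?_) ⟨t₀, ht₀, ?_⟩
  · rw [hw t ht]
    exact mul_le_ite_pos_mul (hz t ht)
  · rw [hw t₀ ht₀] at hne₀ ⊢
    exact mul_lt_ite_pos_mul (hq t₀ ht₀) (hz t₀ ht₀) hne₀

open Classical in
theorem stmt_1_general (D : ℕ) (s : ℕ → ℝ)
    (hs : ∀ t, 1 ≤ t → t ≤ 2 ^ D - 1 → s t ≠ 0)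
    (zstar : ℕ → ℝ)
    (hzstar : ∀ t, zstar t = if ∃ d ≤ D, path s d = t then (1 : ℝ) else 0) :
    (zstar 1 = 1 ∧ ∀ t ∈ Finset.Icc 1 (2 ^ (D + 1) - 1), zstar t ∈ Set.Icc (0 : ℝ) 1) ∧
    (∀ z : ℕ → ℝ, z 1 = 1 →
      (∀ t ∈ Finset.Icc 1 (2 ^ (D + 1) - 1), z t ∈ Set.Icc (0 : ℝ) 1) →
      (∀ t ∈ Finset.Icc 1 (2 ^ (D + 1) - 1), z t = zstar t) ∨
        ∑ t ∈ Finset.Icc 1 (2 ^ (D + 1) - 1), z t * reward s t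
          < ∑ t ∈ Finset.Icc 1 (2 ^ (D + 1) - 1), zstar t * reward s t) := by
  have hlevel : ∀ t ∈ Finset.Icc 1 (2 ^ (D + 1) - 1),
      Nat.log 2 t ≤ D ∧ ∀ u, 0 < u → u < 2 ^ Nat.log 2 t → s u ≠ 0 := by
    intro t ht
    rw [Finset.mem_Icc] at ht
    have hd : Nat.log 2 t ≤ D :=
      Nat.lt_succ_iff.1 (Nat.log_lt_of_lt_pow (by omega) (by omega))
    have := Nat.pow_le_pow_right two_pos hd
    exact ⟨hd, fun u hu hu' => hs u hu (by omega)⟩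
  have hzstar_eq : ∀ t ∈ Finset.Icc 1 (2 ^ (D + 1) - 1),
      zstar t = if 0 < reward s t then 1 else 0 := by
    intro t ht
    obtain ⟨hd, hsd⟩ := hlevel t ht
    rw [hzstar]
    refine if_congr ?_ rfl rfl
    have ht₀ : t ≠ 0 := Nat.one_le_iff_ne_zero.1 (Finset.mem_Icc.1 ht).1
    rw [exists_path_eq_iff, and_iff_right hd, reward_pos_iff_path_eq hsd
      ⟨Nat.pow_log_le_self 2 ht₀, Nat.lt_pow_succ_log_self one_lt_two t⟩]
  have hreward : ∀ t ∈ Finset.Icc 1 (2 ^ (D + 1) - 1), reward s t ≠ 0 := fun t ht =>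
    reward_ne_zero (hlevel t ht).2 (Finset.mem_Icc.1 ht).1 (Nat.lt_pow_succ_log_self one_lt_two t)
  refine ⟨⟨by rw [hzstar, if_pos ⟨0, D.zero_le, rfl⟩], fun t ht => ?_⟩, fun z _ hz => ?_⟩
  · rw [hzstar_eq t ht]
    split_ifs <;> simp
  · refine or_iff_not_imp_left.2 fun hne => ?_
    push Not at hne
    exact sum_mul_lt_of_ne_indicator_pos hreward hzstar_eq hz hne

open Classical in
/-- Lemma 1: the indicator vector `z*` of the traversal path is feasible for the
relaxed linear program (`z 1 = 1`, `z t ∈ [0,1]`), and it is the unique maximizer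
of `∑_t z_t q_t` over all feasible `z`; in particular the relaxed LP has a unique,
integral solution describing the tree traversal. -/
theorem stmt_1 (D : ℕ) (hD : 1 ≤ D) (s : ℕ → ℝ)
    (hs : ∀ t, 1 ≤ t → t ≤ 2 ^ D - 1 → s t ≠ 0)
    (zstar : ℕ → ℝ)
    (hzstar : ∀ t, zstar t = if ∃ d ≤ D, path s d = t then (1 : ℝ) else 0) :
    (zstar 1 = 1 ∧ ∀ t ∈ Finset.Icc 1 (2 ^ (D + 1) - 1), zstar t ∈ Set.Icc (0 : ℝ) 1) ∧
    (∀ z : ℕ → ℝ, z 1 = 1 →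
      (∀ t ∈ Finset.Icc 1 (2 ^ (D + 1) - 1), z t ∈ Set.Icc (0 : ℝ) 1) →
      (∀ t ∈ Finset.Icc 1 (2 ^ (D + 1) - 1), z t = zstar t) ∨
        ∑ t ∈ Finset.Icc 1 (2 ^ (D + 1) - 1), z t * reward s t
          < ∑ t ∈ Finset.Icc 1 (2 ^ (D + 1) - 1), zstar t * reward s t) :=
  stmt_1_general D s hs zstar hzstar
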